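/- Commutator kernel identity and bound (Lemma lem_exp_06 in kernel form): let ξ ∈ C¹(ℝ³; ℝ) be bounded and let φ : ℝ³ → ℂ be measurable, such that all the integrals below converge absolutely. Then Q(ξ²φ, φ) − Q(ξφ, ξφ) = −(1/(4π²)) ∬_{ℝ³×ℝ³} (K₂(|x−y|)/|x−y|²) (ξ(x) − ξ(y))² Re( conj(φ(x)) φ(y) ) dx dy, and consequently | Q(ξ²φ, φ) − Q(ξφ, ξφ) | ≤ (1/(4π²)) ∬_{ℝ³×ℝ³} (K₂(|x−y|)/|x−y|²) (ξ(x) − ξ(y))² |φ(x)| |φ(y)| dx dy. (For φ ∈ H^{1/2}(ℝ³), the left-hand side equals Re⟨ξφ, [ξ, T]φ⟩ with T = √(−Δ+1) − 1, by Lieb's kernel representation of the pseudo-relativistic kinetic energy.) -/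

import Mathlib

/- Commutator kernel identity and bound (Lemma lem_exp_06 in kernel form):
`Q(ξ²φ, φ) − Q(ξφ, ξφ)
   = −(1/4π²) ∬ K₂(|x−y|)/|x−y|² (ξ(x)−ξ(y))² Re(conj(φ(x))φ(y)) dx dy`,
and the resulting bound with `|φ(x)||φ(y)|` on the right-hand side. -/

open MeasureTheory Real
noncomputable section

abbrev V3 := EuclideanSpace ℝ (Fin 3)

/-- The modified Bessel function of the second kind of order 2. -/
def K2 (r : ℝ) : ℝ := ∫ t in Set.Ioi (0:ℝ), Real.exp (-(r * Real.cosh t)) * Real.cosh (2*t)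

/-- The kernel energy form
`Q(f,g) := (1/4π²) ∬ K₂(|x−y|)/|x−y|² Re[conj(f(x)−f(y))(g(x)−g(y))] dx dy`. -/
def Qker (f g : V3 → ℂ) : ℝ :=
  (1/(4*π^2)) * ∫ p : V3 × V3, (K2 ‖p.1 - p.2‖ / ‖p.1 - p.2‖^2) *
    ((starRingEnd ℂ) (f p.1 - f p.2) * (g p.1 - g p.2)).re

lemma K2_nonneg (r : ℝ) : 0 ≤ K2 r :=
  integral_nonneg fun _ => by positivity

lemma Complex.re_conj_sq_mul_sub_sub_re_conj_mul_self (a b : ℝ) (u v : ℂ) :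
    ((starRingEnd ℂ) ((a^2:ℝ) * u - (b^2:ℝ) * v) * (u - v)).re -
      ((starRingEnd ℂ) ((a:ℝ) * u - (b:ℝ) * v) * ((a:ℝ) * u - (b:ℝ) * v)).re
    = -((a - b)^2 * ((starRingEnd ℂ) u * v).re) := by
  simp only [Complex.mul_re, Complex.mul_im, Complex.sub_re, Complex.sub_im,
    Complex.conj_re, Complex.conj_im, Complex.ofReal_re, Complex.ofReal_im]
  ring

section KernelForm

variable {α : Type*} [MeasurableSpace α] {μ : Measure (α × α)} (k : α × α → ℝ)
  (ξ : α → ℝ) (φ : α → ℂ)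

theorem integral_sub_integral_kernel_commutator
    (h1 : Integrable (fun p => k p *
      ((starRingEnd ℂ) (((ξ p.1)^2 : ℝ) * φ p.1 - ((ξ p.2)^2 : ℝ) * φ p.2) *
        (φ p.1 - φ p.2)).re) μ)
    (h2 : Integrable (fun p => k p *
      ((starRingEnd ℂ) ((ξ p.1 : ℝ) * φ p.1 - (ξ p.2 : ℝ) * φ p.2) *
        ((ξ p.1 : ℝ) * φ p.1 - (ξ p.2 : ℝ) * φ p.2)).re) μ) :
    (∫ p, k p * ((starRingEnd ℂ) (((ξ p.1)^2 : ℝ) * φ p.1 - ((ξ p.2)^2 : ℝ) * φ p.2) *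
        (φ p.1 - φ p.2)).re ∂μ) -
      ∫ p, k p * ((starRingEnd ℂ) ((ξ p.1 : ℝ) * φ p.1 - (ξ p.2 : ℝ) * φ p.2) *
        ((ξ p.1 : ℝ) * φ p.1 - (ξ p.2 : ℝ) * φ p.2)).re ∂μ
      = -∫ p, k p * (ξ p.1 - ξ p.2)^2 * ((starRingEnd ℂ) (φ p.1) * φ p.2).re ∂μ := by
  rw [← integral_sub h1 h2, ← integral_neg]
  refine integral_congr_ae (Filter.Eventually.of_forall fun p => ?_)
  simp only [← mul_sub, Complex.re_conj_sq_mul_sub_sub_re_conj_mul_self]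
  ring

theorem abs_integral_kernel_commutator_le (hk : ∀ p, 0 ≤ k p)
    (h : Integrable (fun p => k p * (ξ p.1 - ξ p.2)^2 * (‖φ p.1‖ * ‖φ p.2‖)) μ) :
    |∫ p, k p * (ξ p.1 - ξ p.2)^2 * ((starRingEnd ℂ) (φ p.1) * φ p.2).re ∂μ|
      ≤ ∫ p, k p * (ξ p.1 - ξ p.2)^2 * (‖φ p.1‖ * ‖φ p.2‖) ∂μ := by
  rw [← Real.norm_eq_abs]
  refine norm_integral_le_of_norm_le h (Filter.Eventually.of_forall fun p => ?_)
  have hweight : 0 ≤ k p * (ξ p.1 - ξ p.2)^2 := mul_nonneg (hk p) (sq_nonneg _)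
  have hre : |((starRingEnd ℂ) (φ p.1) * φ p.2).re| ≤ ‖φ p.1‖ * ‖φ p.2‖ := by
    simpa using Complex.abs_re_le_norm ((starRingEnd ℂ) (φ p.1) * φ p.2)
  rw [Real.norm_eq_abs, abs_mul, abs_of_nonneg hweight]
  exact mul_le_mul_of_nonneg_left hre hweight

end KernelForm

theorem commutator_kernel_identity_and_bound_general
    (ξ : V3 → ℝ)
    (φ : V3 → ℂ)
    (h1 : Integrable (fun p : V3 × V3 => (K2 ‖p.1 - p.2‖ / ‖p.1 - p.2‖^2) *
      ((starRingEnd ℂ) (((ξ p.1)^2 : ℝ) * φ p.1 - ((ξ p.2)^2 : ℝ) * φ p.2) *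
        (φ p.1 - φ p.2)).re))
    (h2 : Integrable (fun p : V3 × V3 => (K2 ‖p.1 - p.2‖ / ‖p.1 - p.2‖^2) *
      ((starRingEnd ℂ) ((ξ p.1 : ℝ) * φ p.1 - (ξ p.2 : ℝ) * φ p.2) *
        ((ξ p.1 : ℝ) * φ p.1 - (ξ p.2 : ℝ) * φ p.2)).re))
    (h4 : Integrable (fun p : V3 × V3 => (K2 ‖p.1 - p.2‖ / ‖p.1 - p.2‖^2) *
      (ξ p.1 - ξ p.2)^2 * (‖φ p.1‖ * ‖φ p.2‖))) :
    Qker (fun x => ((ξ x)^2 : ℝ) * φ x) φ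
        - Qker (fun x => (ξ x : ℝ) * φ x) (fun x => (ξ x : ℝ) * φ x)
      = -(1/(4*π^2)) * ∫ p : V3 × V3, (K2 ‖p.1 - p.2‖ / ‖p.1 - p.2‖^2) *
          (ξ p.1 - ξ p.2)^2 * ((starRingEnd ℂ) (φ p.1) * φ p.2).re ∧
    |Qker (fun x => ((ξ x)^2 : ℝ) * φ x) φ
        - Qker (fun x => (ξ x : ℝ) * φ x) (fun x => (ξ x : ℝ) * φ x)|
      ≤ (1/(4*π^2)) * ∫ p : V3 × V3, (K2 ‖p.1 - p.2‖ / ‖p.1 - p.2‖^2) *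
          (ξ p.1 - ξ p.2)^2 * (‖φ p.1‖ * ‖φ p.2‖) := by
  have identity : Qker (fun x => ((ξ x)^2 : ℝ) * φ x) φ
        - Qker (fun x => (ξ x : ℝ) * φ x) (fun x => (ξ x : ℝ) * φ x)
      = -(1/(4*π^2)) * ∫ p : V3 × V3, (K2 ‖p.1 - p.2‖ / ‖p.1 - p.2‖^2) *
          (ξ p.1 - ξ p.2)^2 * ((starRingEnd ℂ) (φ p.1) * φ p.2).re := by
    rw [Qker, Qker, ← mul_sub, integral_sub_integral_kernel_commutator _ ξ φ h1 h2]
    ring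
  refine ⟨identity, ?_⟩
  rw [identity, abs_mul, abs_neg, abs_of_pos (by positivity)]
  gcongr
  exact abs_integral_kernel_commutator_le _ ξ φ
    (fun p => div_nonneg (K2_nonneg _) (sq_nonneg _)) h4

theorem commutator_kernel_identity_and_bound
    (ξ : V3 → ℝ) (hξ : ContDiff ℝ 1 ξ) (hbd : ∃ Cb, ∀ x, |ξ x| ≤ Cb)
    (φ : V3 → ℂ) (hφ : Measurable φ)
    (h1 : Integrable (fun p : V3 × V3 => (K2 ‖p.1 - p.2‖ / ‖p.1 - p.2‖^2) *
      ((starRingEnd ℂ) (((ξ p.1)^2 : ℝ) * φ p.1 - ((ξ p.2)^2 : ℝ) * φ p.2) *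
        (φ p.1 - φ p.2)).re))
    (h2 : Integrable (fun p : V3 × V3 => (K2 ‖p.1 - p.2‖ / ‖p.1 - p.2‖^2) *
      ((starRingEnd ℂ) ((ξ p.1 : ℝ) * φ p.1 - (ξ p.2 : ℝ) * φ p.2) *
        ((ξ p.1 : ℝ) * φ p.1 - (ξ p.2 : ℝ) * φ p.2)).re))
    (h3 : Integrable (fun p : V3 × V3 => (K2 ‖p.1 - p.2‖ / ‖p.1 - p.2‖^2) *
      (ξ p.1 - ξ p.2)^2 * ((starRingEnd ℂ) (φ p.1) * φ p.2).re))
    (h4 : Integrable (fun p : V3 × V3 => (K2 ‖p.1 - p.2‖ / ‖p.1 - p.2‖^2) *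
      (ξ p.1 - ξ p.2)^2 * (‖φ p.1‖ * ‖φ p.2‖))) :
    Qker (fun x => ((ξ x)^2 : ℝ) * φ x) φ
        - Qker (fun x => (ξ x : ℝ) * φ x) (fun x => (ξ x : ℝ) * φ x)
      = -(1/(4*π^2)) * ∫ p : V3 × V3, (K2 ‖p.1 - p.2‖ / ‖p.1 - p.2‖^2) *
          (ξ p.1 - ξ p.2)^2 * ((starRingEnd ℂ) (φ p.1) * φ p.2).re ∧
    |Qker (fun x => ((ξ x)^2 : ℝ) * φ x) φ
        - Qker (fun x => (ξ x : ℝ) * φ x) (fun x => (ξ x : ℝ) * φ x)|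
      ≤ (1/(4*π^2)) * ∫ p : V3 × V3, (K2 ‖p.1 - p.2‖ / ‖p.1 - p.2‖^2) *
          (ξ p.1 - ξ p.2)^2 * (‖φ p.1‖ * ‖φ p.2‖) :=
  commutator_kernel_identity_and_bound_general ξ φ h1 h2 h4
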